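/- arXiv:2511.05125 — 2 statements merged into one kernel-verified Lean document; each statement's English description precedes it below -/
import Mathlib

section
/- Lieb's concavity in the form used in the paper: fix a dimension D ≥ 1 and s ∈ [0,1]. For all positive semidefinite complex D×D matrices A, B, C, E and every λ ∈ [0,1], one has Tr((λA + (1−λ)C)^s (λB + (1−λ)E)^{1−s}) ≥ λ·Tr(A^s B^{1−s}) + (1−λ)·Tr(C^s E^{1−s}); that is, the map (A,B) ↦ Tr(A^s B^{1−s}) is jointly concave on pairs of positive semidefinite matrices. -/
open scoped ComplexOrder

open Matrix

/-- Fractional power of a Hermitian complex matrix, via the spectral decomposition: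
apply `x \u21a6 x^t` to the eigenvalues, with the convention `0^0 = 0` (so `A^0` is the
orthogonal projection onto the support of `A`).  Junk value `0` for non-Hermitian input. -/
noncomputable def matPow {n : Type*} [Fintype n] [DecidableEq n]
    (A : Matrix n n ℂ) (t : ℝ) : Matrix n n ℂ :=
  if hA : A.IsHermitian then
    (hA.eigenvectorUnitary : Matrix n n ℂ) *
      Matrix.diagonal (fun i =>
        (Complex.ofReal (if hA.eigenvalues i = 0 then (0 : ℝ) else hA.eigenvalues i ^ t))) *
      (star (hA.eigenvectorUnitary : Matrix n n ℂ))
  else 0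

/-- Spectral norm (largest singular value) of a complex matrix, i.e. the operator norm
of the induced map on Euclidean space. -/
noncomputable def specNorm {n : Type*} [Fintype n] [DecidableEq n] (A : Matrix n n ℂ) : ℝ :=
  ‖Matrix.toEuclideanCLM (𝕜 := ℂ) (n := n) A‖

/-- `Tr(ρ^s ρ'^{1-s})` as a real number. -/
noncomputable def qs {n : Type*} [Fintype n] [DecidableEq n]
    (ρ ρ' : Matrix n n ℂ) (s : ℝ) : ℝ :=
  (Matrix.trace (matPow ρ s * matPow ρ' (1 - s))).re

/-!
Write `A = ∑ aᵢ uᵢuᵢ*`, `B = ∑ bⱼ vⱼvⱼ*`, so that `Tr(A^s B^(1-s)) = ∑ᵢⱼ aᵢ^s bⱼ^(1-s) |⟨uᵢ, vⱼ⟩|²`.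
For `0 < s < 1` the substitution `u = tb/a` gives
`a^s b^(1-s) ∫₀^∞ u^(s-1)/(1+u) du = ∫₀^∞ t^(s-2) (a : tb) dt` with the parallel sum
`a : b = ab/(a+b)`, so the trace is a positive multiple of
`∫₀^∞ t^(s-2) ∑ᵢⱼ (aᵢ : tbⱼ) |⟨uᵢ, vⱼ⟩|² dt`. Since `(a : b)|w|² = min_y (a|y|² + b|w-y|²)`,
minimising entrywise in the two eigenbases shows that
`∑ᵢⱼ (aᵢ : tbⱼ) |⟨uᵢ, vⱼ⟩|² = min_X (Tr(X* A X) + t Tr((1-X)* (1-X) B))`, a minimum of linear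
functions of `(A, B)` and hence jointly concave. The endpoints `s = 0, 1` follow by continuity
in `s`, which holds because of the convention `0^s = 0`.
-/

open MeasureTheory

noncomputable section

def suppPow (x t : ℝ) : ℝ := if x = 0 then 0 else x ^ t

@[fun_prop]
lemma continuous_suppPow (x : ℝ) : Continuous (suppPow x) := by
  unfold suppPow
  split_ifs with hx
  · exact continuous_const
  · exact continuous_iff_continuousAt.2 fun _ => Real.continuousAt_const_rpow hx

lemma suppPow_of_pos {x : ℝ} (hx : 0 < x) (t : ℝ) : suppPow x t = x ^ t := if_neg hx.ne'

def parallelSum (a b : ℝ) : ℝ := a * b / (a + b)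

lemma parallelSum_zero_left (b : ℝ) : parallelSum 0 b = 0 := by simp [parallelSum]

lemma parallelSum_zero_right (a : ℝ) : parallelSum a 0 = 0 := by simp [parallelSum]

lemma parallelSum_mul_add_sq_le {a b : ℝ} (ha : 0 ≤ a) (hb : 0 ≤ b) (p q : ℝ) :
    parallelSum a b * (p + q) ^ 2 ≤ a * p ^ 2 + b * q ^ 2 := by
  rcases (add_nonneg ha hb).eq_or_lt with hab | hab
  · simp only [parallelSum, ← hab, div_zero, zero_mul]
    positivity
  rw [parallelSum, div_mul_eq_mul_div, div_le_iff₀ hab]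
  nlinarith [sq_nonneg (a * p - b * q)]

lemma parallelSum_mul_norm_sq_le {E : Type*} [SeminormedAddCommGroup E] {a b : ℝ}
    (ha : 0 ≤ a) (hb : 0 ≤ b) (w y : E) :
    parallelSum a b * ‖w‖ ^ 2 ≤ a * ‖y‖ ^ 2 + b * ‖w - y‖ ^ 2 := by
  have hw : ‖w‖ ≤ ‖y‖ + ‖w - y‖ := norm_le_insert' w y |>.trans (by rw [norm_sub_rev])
  calc parallelSum a b * ‖w‖ ^ 2 ≤ parallelSum a b * (‖y‖ + ‖w - y‖) ^ 2 := by
        gcongr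
        exact div_nonneg (mul_nonneg ha hb) (add_nonneg ha hb)
    _ ≤ _ := parallelSum_mul_add_sq_le ha hb _ _

lemma parallelSum_mul_norm_sq_eq {E : Type*} [SeminormedAddCommGroup E] [NormedSpace ℝ E]
    {a b : ℝ} (ha : 0 ≤ a) (hb : 0 ≤ b) (w : E) :
    a * ‖(b / (a + b)) • w‖ ^ 2 + b * ‖w - (b / (a + b)) • w‖ ^ 2
      = parallelSum a b * ‖w‖ ^ 2 := by
  have hsub : w - (b / (a + b)) • w = (1 - b / (a + b)) • w := by rw [sub_smul, one_smul]
  rw [hsub, norm_smul, norm_smul, mul_pow, mul_pow, Real.norm_eq_abs, Real.norm_eq_abs,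
    sq_abs, sq_abs]
  rcases (add_nonneg ha hb).eq_or_lt with hab | hab
  · obtain rfl : a = 0 := by linarith
    obtain rfl : b = 0 := by linarith
    simp [parallelSum]
  · rw [parallelSum]
    field_simp
    ring

section MellinKernel

open Set

def mellinInvOneAdd (s : ℝ) : ℝ := ∫ u in Ioi (0 : ℝ), u ^ (s - 1) / (1 + u)

lemma integrableOn_rpow_div_one_add {s : ℝ} (hs : s ∈ Ioo 0 1) :
    IntegrableOn (fun u : ℝ => u ^ (s - 1) / (1 + u)) (Ioi 0) := by
  have hmeas : AEStronglyMeasurable (fun u : ℝ => u ^ (s - 1) / (1 + u)) := by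
    apply Measurable.aestronglyMeasurable
    fun_prop
  rw [← Ioc_union_Ioi_eq_Ioi zero_le_one]
  refine IntegrableOn.union ?_ ?_
  · have hint : IntegrableOn (fun u : ℝ => u ^ (s - 1)) (Ioc 0 1) := by
      rw [← intervalIntegrable_iff_integrableOn_Ioc_of_le zero_le_one]
      exact intervalIntegral.intervalIntegrable_rpow' (by linarith [hs.1])
    refine hint.mono' hmeas.restrict ?_
    filter_upwards [ae_restrict_mem measurableSet_Ioc] with u hu
    rw [Real.norm_of_nonneg (by have := hu.1; positivity)]
    exact div_le_self (by have := hu.1; positivity) (by linarith [hu.1])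
  · have hint : IntegrableOn (fun u : ℝ => u ^ (s - 2)) (Ioi 1) :=
      integrableOn_Ioi_rpow_of_lt (by linarith [hs.2]) one_pos
    refine hint.mono' hmeas.restrict ?_
    filter_upwards [ae_restrict_mem measurableSet_Ioi] with u (hu : 1 < u)
    have hu0 : 0 < u := one_pos.trans hu
    rw [Real.norm_of_nonneg (by positivity)]
    calc u ^ (s - 1) / (1 + u) ≤ u ^ (s - 1) / u := by gcongr; linarith
      _ = u ^ (s - 2) := by
        rw [div_eq_iff hu0.ne', ← Real.rpow_add_one hu0.ne']
        ring_nf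

lemma mellinInvOneAdd_pos {s : ℝ} (hs : s ∈ Ioo 0 1) : 0 < mellinInvOneAdd s := by
  have hpos : ∀ u ∈ Ioi (0 : ℝ), 0 < u ^ (s - 1) / (1 + u) := fun u (hu : 0 < u) => by
    positivity
  rw [mellinInvOneAdd, setIntegral_pos_iff_support_of_nonneg_ae
    ((ae_restrict_mem measurableSet_Ioi).mono fun u hu => (hpos u hu).le)
    (integrableOn_rpow_div_one_add hs)]
  have hsupp : Ioi (0 : ℝ) ⊆ Function.support (fun u : ℝ => u ^ (s - 1) / (1 + u)) ∩ Ioi 0 :=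
    fun u hu => ⟨(hpos u hu).ne', hu⟩
  exact (by simp : (0 : ENNReal) < volume (Ioi (0 : ℝ))).trans_le (measure_mono hsupp)

lemma rpow_mul_parallelSum_eq {a b t : ℝ} (s : ℝ) (ha : 0 < a) (hb : 0 < b) (ht : 0 < t) :
    t ^ (s - 2) * parallelSum a (t * b)
      = a ^ s * b ^ (1 - s) * (b / a * ((b / a * t) ^ (s - 1) / (1 + b / a * t))) := by
  have h1 : t ^ (s - 2) = t ^ (s - 1) / t := by
    rw [eq_div_iff ht.ne', ← Real.rpow_add_one ht.ne']; ring_nf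
  have h2 : (b / a * t) ^ (s - 1) = b ^ s / b * (a / a ^ s) * t ^ (s - 1) := by
    rw [Real.mul_rpow (by positivity) ht.le, Real.div_rpow hb.le ha.le, Real.rpow_sub_one hb.ne',
      Real.rpow_sub_one ha.ne']
    field_simp
  have h3 : b ^ (1 - s) = b / b ^ s := by rw [Real.rpow_sub hb, Real.rpow_one]
  rw [h1, h2, h3, parallelSum]
  field_simp

lemma integrableOn_rpow_mul_parallelSum {a b s : ℝ} (hs : s ∈ Ioo 0 1) (ha : 0 ≤ a)
    (hb : 0 ≤ b) : IntegrableOn (fun t : ℝ => t ^ (s - 2) * parallelSum a (t * b)) (Ioi 0) := by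
  rcases ha.eq_or_lt with rfl | ha
  · simp [parallelSum_zero_left]
  rcases hb.eq_or_lt with rfl | hb
  · simp [parallelSum_zero_right]
  refine IntegrableOn.congr_fun ?_ (fun t ht => (rpow_mul_parallelSum_eq s ha hb ht).symm)
    measurableSet_Ioi
  have := (integrableOn_Ioi_comp_mul_left_iff (fun u : ℝ => u ^ (s - 1) / (1 + u)) 0
    (div_pos hb ha)).2 (by simpa using integrableOn_rpow_div_one_add hs)
  exact (this.const_mul _).const_mul _

lemma integral_rpow_mul_parallelSum {a b s : ℝ} (ha : 0 ≤ a) (hb : 0 ≤ b) :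
    ∫ t in Ioi (0 : ℝ), t ^ (s - 2) * parallelSum a (t * b)
      = suppPow a s * suppPow b (1 - s) * mellinInvOneAdd s := by
  rcases ha.eq_or_lt with rfl | ha
  · simp [parallelSum_zero_left, suppPow]
  rcases hb.eq_or_lt with rfl | hb
  · simp [parallelSum_zero_right, suppPow]
  rw [setIntegral_congr_fun measurableSet_Ioi (fun t ht => rpow_mul_parallelSum_eq s ha hb ht),
    integral_const_mul, integral_const_mul,
    integral_comp_mul_left_Ioi (fun u : ℝ => u ^ (s - 1) / (1 + u)) 0 (div_pos hb ha),
    mul_zero, smul_eq_mul, mul_inv_cancel_left₀ (div_pos hb ha).ne', suppPow_of_pos ha,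
    suppPow_of_pos hb, mellinInvOneAdd]

end MellinKernel

section Spectral

variable {n : Type*} [Fintype n] [DecidableEq n]

lemma re_trace_diagonal_mul_mul_diagonal_mul_conjTranspose (a b : n → ℝ) (Y : Matrix n n ℂ) :
    (trace (diagonal (fun i => (a i : ℂ)) * Y * diagonal (fun j => (b j : ℂ)) * Yᴴ)).re
      = ∑ i, ∑ j, a i * b j * ‖Y i j‖ ^ 2 := by
  rw [trace, Complex.re_sum]
  refine Finset.sum_congr rfl fun i _ => ?_
  rw [diag_apply, mul_apply, Complex.re_sum]
  refine Finset.sum_congr rfl fun j _ => ?_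
  have hY : Y i j * star (Y i j) = ((‖Y i j‖ ^ 2 : ℝ) : ℂ) := by
    rw [Complex.star_def, Complex.mul_conj', Complex.ofReal_pow]
  rw [mul_diagonal, diagonal_mul, conjTranspose_apply,
    show (a i : ℂ) * Y i j * b j * star (Y i j) = ((a i * b j : ℝ) : ℂ) * (Y i j * star (Y i j))
      by push_cast; ring, hY, ← Complex.ofReal_mul, Complex.ofReal_re]

lemma re_trace_conjTranspose_mul_mul_mul_eq_sum (U V X : Matrix n n ℂ) (a b : n → ℝ) :
    (trace (Xᴴ * (U * diagonal (fun i => (a i : ℂ)) * Uᴴ) * X *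
      (V * diagonal (fun j => (b j : ℂ)) * Vᴴ))).re
      = ∑ i, ∑ j, a i * b j * ‖(Uᴴ * X * V) i j‖ ^ 2 := by
  set Da := diagonal (fun i => (a i : ℂ))
  set Db := diagonal (fun j => (b j : ℂ))
  rw [← re_trace_diagonal_mul_mul_diagonal_mul_conjTranspose]
  calc (trace (Xᴴ * (U * Da * Uᴴ) * X * (V * Db * Vᴴ))).re
      = (trace ((Xᴴ * U) * (Da * Uᴴ * X * V * Db * Vᴴ))).re := by simp only [Matrix.mul_assoc]
    _ = (trace ((Da * Uᴴ * X * V * Db * Vᴴ) * (Xᴴ * U))).re := by rw [trace_mul_comm]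
    _ = (trace (Da * (Uᴴ * X * V) * Db * (Uᴴ * X * V)ᴴ)).re := by
      simp only [conjTranspose_mul, conjTranspose_conjTranspose, Matrix.mul_assoc]

lemma Matrix.IsHermitian.eq_mul_diagonal_mul_conjTranspose {A : Matrix n n ℂ} (hA : A.IsHermitian) :
    A = (hA.eigenvectorUnitary : Matrix n n ℂ) * diagonal (fun i => (hA.eigenvalues i : ℂ)) *
      (hA.eigenvectorUnitary : Matrix n n ℂ)ᴴ := by
  conv_lhs => rw [hA.spectral_theorem, Unitary.conjStarAlgAut_apply]
  rfl

lemma one_eq_mul_diagonal_mul_conjTranspose {U : Matrix n n ℂ} (hU : U ∈ unitaryGroup n ℂ) :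
    (1 : Matrix n n ℂ) = U * diagonal (fun _ => ((1 : ℝ) : ℂ)) * Uᴴ := by
  rw [Complex.ofReal_one, diagonal_one, Matrix.mul_one, ← star_eq_conjTranspose,
    mem_unitaryGroup_iff.1 hU]

lemma matPow_of_isHermitian {A : Matrix n n ℂ} (hA : A.IsHermitian) (t : ℝ) :
    matPow A t = (hA.eigenvectorUnitary : Matrix n n ℂ) *
      diagonal (fun i => (suppPow (hA.eigenvalues i) t : ℂ)) *
      (hA.eigenvectorUnitary : Matrix n n ℂ)ᴴ := by
  rw [matPow, dif_pos hA]
  rfl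

def eigenCoords {A B : Matrix n n ℂ} (hA : A.IsHermitian) (hB : B.IsHermitian)
    (X : Matrix n n ℂ) : Matrix n n ℂ :=
  (hA.eigenvectorUnitary : Matrix n n ℂ)ᴴ * X * hB.eigenvectorUnitary

/-- `∑ᵢⱼ f(aᵢ, bⱼ) |⟨uᵢ, vⱼ⟩|²` for the eigenpairs `(aᵢ, uᵢ)` of `A` and `(bⱼ, vⱼ)` of `B`. -/
def spectralPairing {A B : Matrix n n ℂ} (hA : A.IsHermitian) (hB : B.IsHermitian)
    (f : ℝ → ℝ → ℝ) : ℝ :=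
  ∑ i, ∑ j, f (hA.eigenvalues i) (hB.eigenvalues j) * ‖eigenCoords hA hB 1 i j‖ ^ 2

variable {A B : Matrix n n ℂ}

lemma spectralPairing_const_mul (hA : A.IsHermitian) (hB : B.IsHermitian) (c : ℝ)
    (f : ℝ → ℝ → ℝ) :
    spectralPairing hA hB (fun a b => c * f a b) = c * spectralPairing hA hB f := by
  simp only [spectralPairing, Finset.mul_sum, mul_assoc]

lemma qs_eq_spectralPairing (hA : A.IsHermitian) (hB : B.IsHermitian) (s : ℝ) :
    qs A B s = spectralPairing hA hB (fun a b => suppPow a s * suppPow b (1 - s)) := by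
  have hone : matPow A s * matPow B (1 - s) = 1ᴴ * matPow A s * 1 * matPow B (1 - s) := by
    simp only [conjTranspose_one, Matrix.one_mul, Matrix.mul_one]
  rw [qs, hone, matPow_of_isHermitian hA, matPow_of_isHermitian hB,
    re_trace_conjTranspose_mul_mul_mul_eq_sum, spectralPairing]
  rfl

lemma continuous_qs (hA : A.IsHermitian) (hB : B.IsHermitian) : Continuous (qs A B) := by
  simp only [funext (qs_eq_spectralPairing hA hB), spectralPairing]
  fun_prop

lemma eigenCoords_one_sub (hA : A.IsHermitian) (hB : B.IsHermitian) (X : Matrix n n ℂ) :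
    eigenCoords hA hB (1 - X) = eigenCoords hA hB 1 - eigenCoords hA hB X := by
  simp only [eigenCoords, Matrix.mul_sub, Matrix.sub_mul]

lemma eigenCoords_mul_mul_conjTranspose (hA : A.IsHermitian) (hB : B.IsHermitian)
    (Y : Matrix n n ℂ) :
    eigenCoords hA hB ((hA.eigenvectorUnitary : Matrix n n ℂ) * Y *
      (hB.eigenvectorUnitary : Matrix n n ℂ)ᴴ) = Y := by
  simp only [eigenCoords, ← star_eq_conjTranspose, Matrix.mul_assoc,
    UnitaryGroup.star_mul_self, Matrix.mul_one]
  rw [← Matrix.mul_assoc, UnitaryGroup.star_mul_self, Matrix.one_mul]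

end Spectral

section Variational

variable {n : Type*} [Fintype n] [DecidableEq n] {A B C E : Matrix n n ℂ}

def parallelForm (A B : Matrix n n ℂ) (t : ℝ) (X : Matrix n n ℂ) : ℝ :=
  (trace (Xᴴ * A * X)).re + t * (trace ((1 - X)ᴴ * (1 - X) * B)).re

def parallelPairing (hA : A.IsHermitian) (hB : B.IsHermitian) (t : ℝ) : ℝ :=
  spectralPairing hA hB (fun a b => parallelSum a (t * b))

lemma parallelForm_eq_sum (hA : A.IsHermitian) (hB : B.IsHermitian) (t : ℝ)
    (X : Matrix n n ℂ) :
    parallelForm A B t X = ∑ i, ∑ j, (hA.eigenvalues i * ‖eigenCoords hA hB X i j‖ ^ 2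
      + t * hB.eigenvalues j * ‖eigenCoords hA hB (1 - X) i j‖ ^ 2) := by
  have hU := one_eq_mul_diagonal_mul_conjTranspose hA.eigenvectorUnitary.2
  have hV := one_eq_mul_diagonal_mul_conjTranspose hB.eigenvectorUnitary.2
  have hX := re_trace_conjTranspose_mul_mul_mul_eq_sum (hA.eigenvectorUnitary : Matrix n n ℂ)
    hB.eigenvectorUnitary X hA.eigenvalues (fun _ => 1)
  have hY := re_trace_conjTranspose_mul_mul_mul_eq_sum (hA.eigenvectorUnitary : Matrix n n ℂ)
    hB.eigenvectorUnitary (1 - X) (fun _ => 1) hB.eigenvalues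
  rw [← hA.eq_mul_diagonal_mul_conjTranspose, ← hV, Matrix.mul_one] at hX
  rw [← hB.eq_mul_diagonal_mul_conjTranspose, ← hU, Matrix.mul_one] at hY
  rw [parallelForm, hX, hY, Finset.mul_sum, ← Finset.sum_add_distrib]
  refine Finset.sum_congr rfl fun i _ => ?_
  rw [Finset.mul_sum, ← Finset.sum_add_distrib]
  exact Finset.sum_congr rfl fun j _ => by rw [eigenCoords, eigenCoords]; ring

lemma parallelPairing_le_parallelForm (hA : A.PosSemidef) (hB : B.PosSemidef) {t : ℝ}
    (ht : 0 ≤ t) (X : Matrix n n ℂ) : parallelPairing hA.1 hB.1 t ≤ parallelForm A B t X := by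
  rw [parallelForm_eq_sum hA.1 hB.1, eigenCoords_one_sub]
  refine Finset.sum_le_sum fun i _ => Finset.sum_le_sum fun j _ => ?_
  exact parallelSum_mul_norm_sq_le (hA.eigenvalues_nonneg i)
    (mul_nonneg ht (hB.eigenvalues_nonneg j)) _ _

lemma exists_parallelForm_eq_parallelPairing (hA : A.PosSemidef) (hB : B.PosSemidef) {t : ℝ}
    (ht : 0 ≤ t) : ∃ X, parallelForm A B t X = parallelPairing hA.1 hB.1 t := by
  let Y : Matrix n n ℂ := of fun i j =>
    (t * hB.1.eigenvalues j / (hA.1.eigenvalues i + t * hB.1.eigenvalues j)) •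
      eigenCoords hA.1 hB.1 1 i j
  refine ⟨(hA.1.eigenvectorUnitary : Matrix n n ℂ) * Y *
    (hB.1.eigenvectorUnitary : Matrix n n ℂ)ᴴ, ?_⟩
  rw [parallelForm_eq_sum hA.1 hB.1, eigenCoords_one_sub, eigenCoords_mul_mul_conjTranspose]
  refine Finset.sum_congr rfl fun i _ => Finset.sum_congr rfl fun j _ => ?_
  exact parallelSum_mul_norm_sq_eq (hA.eigenvalues_nonneg i)
    (mul_nonneg ht (hB.eigenvalues_nonneg j)) _

lemma parallelForm_add_smul (A B C E : Matrix n n ℂ) (l m t : ℝ) (X : Matrix n n ℂ) :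
    parallelForm (l • A + m • C) (l • B + m • E) t X
      = l * parallelForm A B t X + m * parallelForm C E t X := by
  simp only [parallelForm, Matrix.mul_add, Matrix.add_mul, Matrix.mul_smul, Matrix.smul_mul,
    trace_add, trace_smul, Complex.add_re, Complex.real_smul, Complex.re_ofReal_mul]
  ring

/-- A minimum of forms that are linear in `(A, B)`. -/
lemma mul_parallelPairing_add_mul_le (hA : A.PosSemidef) (hB : B.PosSemidef)
    (hC : C.PosSemidef) (hE : E.PosSemidef) {l m t : ℝ} (hl : 0 ≤ l) (hm : 0 ≤ m)
    (ht : 0 ≤ t) :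
    l * parallelPairing hA.1 hB.1 t + m * parallelPairing hC.1 hE.1 t
      ≤ parallelPairing ((hA.smul hl).add (hC.smul hm)).1 ((hB.smul hl).add (hE.smul hm)).1 t := by
  obtain ⟨X, hX⟩ := exists_parallelForm_eq_parallelPairing ((hA.smul hl).add (hC.smul hm))
    ((hB.smul hl).add (hE.smul hm)) ht
  rw [← hX, parallelForm_add_smul]
  gcongr
  · exact parallelPairing_le_parallelForm hA hB ht X
  · exact parallelPairing_le_parallelForm hC hE ht X

end Variational

section JointConcavity

open Set

variable {n : Type*} [Fintype n] [DecidableEq n] {A B C E : Matrix n n ℂ}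

lemma integrable_spectralPairing {α : Type*} [MeasurableSpace α] {μ : Measure α}
    (hA : A.IsHermitian) (hB : B.IsHermitian) {f : α → ℝ → ℝ → ℝ}
    (hf : ∀ i j, Integrable (fun x => f x (hA.eigenvalues i) (hB.eigenvalues j)) μ) :
    Integrable (fun x => spectralPairing hA hB (f x)) μ :=
  integrable_finsetSum _ fun i _ => integrable_finsetSum _ fun j _ => (hf i j).mul_const _

lemma integral_spectralPairing {α : Type*} [MeasurableSpace α] {μ : Measure α}
    (hA : A.IsHermitian) (hB : B.IsHermitian) {f : α → ℝ → ℝ → ℝ}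
    (hf : ∀ i j, Integrable (fun x => f x (hA.eigenvalues i) (hB.eigenvalues j)) μ) :
    ∫ x, spectralPairing hA hB (f x) ∂μ = spectralPairing hA hB (fun a b => ∫ x, f x a b ∂μ) := by
  simp only [spectralPairing]
  rw [integral_finsetSum _ fun i _ => integrable_finsetSum _ fun j _ => (hf i j).mul_const _]
  refine Finset.sum_congr rfl fun i _ => ?_
  rw [integral_finsetSum _ fun j _ => (hf i j).mul_const _]
  exact Finset.sum_congr rfl fun j _ => integral_mul_const _ _

lemma integrableOn_rpow_mul_parallelPairing (hA : A.PosSemidef) (hB : B.PosSemidef) {s : ℝ}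
    (hs : s ∈ Ioo 0 1) :
    IntegrableOn (fun t => t ^ (s - 2) * parallelPairing hA.1 hB.1 t) (Ioi 0) := by
  simp only [parallelPairing, ← spectralPairing_const_mul]
  exact integrable_spectralPairing hA.1 hB.1 fun i j =>
    integrableOn_rpow_mul_parallelSum hs (hA.eigenvalues_nonneg i) (hB.eigenvalues_nonneg j)

lemma integral_rpow_mul_parallelPairing (hA : A.PosSemidef) (hB : B.PosSemidef) {s : ℝ}
    (hs : s ∈ Ioo 0 1) :
    ∫ t in Ioi 0, t ^ (s - 2) * parallelPairing hA.1 hB.1 t = qs A B s * mellinInvOneAdd s := by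
  simp only [parallelPairing, ← spectralPairing_const_mul]
  rw [integral_spectralPairing (f := fun t a b => t ^ (s - 2) * parallelSum a (t * b)) hA.1 hB.1
      fun i j => integrableOn_rpow_mul_parallelSum hs (hA.eigenvalues_nonneg i)
        (hB.eigenvalues_nonneg j),
    qs_eq_spectralPairing hA.1 hB.1, mul_comm, ← spectralPairing_const_mul]
  refine Finset.sum_congr rfl fun i _ => Finset.sum_congr rfl fun j _ => ?_
  dsimp only
  rw [integral_rpow_mul_parallelSum (hA.eigenvalues_nonneg i) (hB.eigenvalues_nonneg j),
    mul_comm (mellinInvOneAdd s)]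

lemma mul_qs_add_mul_qs_le_of_mem_Ioo (hA : A.PosSemidef) (hB : B.PosSemidef)
    (hC : C.PosSemidef) (hE : E.PosSemidef) {l m s : ℝ} (hl : 0 ≤ l) (hm : 0 ≤ m)
    (hs : s ∈ Ioo 0 1) :
    l * qs A B s + m * qs C E s ≤ qs (l • A + m • C) (l • B + m • E) s := by
  have hM := (hA.smul hl).add (hC.smul hm)
  have hN := (hB.smul hl).add (hE.smul hm)
  rw [← mul_le_mul_iff_of_pos_right (mellinInvOneAdd_pos hs), add_mul, mul_assoc, mul_assoc,
    ← integral_rpow_mul_parallelPairing hA hB hs, ← integral_rpow_mul_parallelPairing hC hE hs,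
    ← integral_rpow_mul_parallelPairing hM hN hs, ← integral_const_mul, ← integral_const_mul,
    ← integral_add ((integrableOn_rpow_mul_parallelPairing hA hB hs).const_mul _)
      ((integrableOn_rpow_mul_parallelPairing hC hE hs).const_mul _)]
  refine setIntegral_mono_on (((integrableOn_rpow_mul_parallelPairing hA hB hs).const_mul _).add
    ((integrableOn_rpow_mul_parallelPairing hC hE hs).const_mul _))
    (integrableOn_rpow_mul_parallelPairing hM hN hs) measurableSet_Ioi fun t (ht : 0 < t) => ?_
  calc l * (t ^ (s - 2) * parallelPairing hA.1 hB.1 t)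
        + m * (t ^ (s - 2) * parallelPairing hC.1 hE.1 t)
      = t ^ (s - 2) * (l * parallelPairing hA.1 hB.1 t + m * parallelPairing hC.1 hE.1 t) := by ring
    _ ≤ t ^ (s - 2) * parallelPairing hM.1 hN.1 t := by
      gcongr
      exact mul_parallelPairing_add_mul_le hA hB hC hE hl hm ht.le

lemma mul_qs_add_mul_qs_le (hA : A.PosSemidef) (hB : B.PosSemidef)
    (hC : C.PosSemidef) (hE : E.PosSemidef) {l m s : ℝ} (hl : 0 ≤ l) (hm : 0 ≤ m)
    (hs : s ∈ Icc 0 1) :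
    l * qs A B s + m * qs C E s ≤ qs (l • A + m • C) (l • B + m • E) s := by
  have hM := (hA.smul hl).add (hC.smul hm)
  have hN := (hB.smul hl).add (hE.smul hm)
  have hclosed :
      IsClosed {s | l * qs A B s + m * qs C E s ≤ qs (l • A + m • C) (l • B + m • E) s} :=
    isClosed_le
      (((continuous_qs hA.1 hB.1).const_mul l).add ((continuous_qs hC.1 hE.1).const_mul m))
      (continuous_qs hM.1 hN.1)
  rw [← closure_Ioo zero_ne_one] at hs
  exact hclosed.closure_subset_iff.2
    (fun s hs => mul_qs_add_mul_qs_le_of_mem_Ioo hA hB hC hE hl hm hs) hs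

end JointConcavity

end

theorem lieb_concavity_trace_general {D : ℕ} (s : ℝ) (hs : s ∈ Set.Icc (0:ℝ) 1)
    (A B C E : Matrix (Fin D) (Fin D) ℂ)
    (hA : A.PosSemidef) (hB : B.PosSemidef) (hC : C.PosSemidef) (hE : E.PosSemidef)
    (l : ℝ) (hl : l ∈ Set.Icc (0:ℝ) 1) :
    l * qs A B s + (1 - l) * qs C E s
      ≤ qs (l • A + (1 - l) • C) (l • B + (1 - l) • E) s :=
  mul_qs_add_mul_qs_le hA hB hC hE hl.1 (sub_nonneg.2 hl.2) hs

/-- Lieb's concavity in the form used in the paper: joint concavity of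
`(A, B) ↦ Tr(A^s B^{1-s})` on pairs of positive semidefinite matrices. -/
theorem lieb_concavity_trace {D : ℕ} (hD : 1 ≤ D) (s : ℝ) (hs : s ∈ Set.Icc (0:ℝ) 1)
    (A B C E : Matrix (Fin D) (Fin D) ℂ)
    (hA : A.PosSemidef) (hB : B.PosSemidef) (hC : C.PosSemidef) (hE : E.PosSemidef)
    (l : ℝ) (hl : l ∈ Set.Icc (0:ℝ) 1) :
    l * qs A B s + (1 - l) * qs C E s
      ≤ qs (l • A + (1 - l) • C) (l • B + (1 - l) • E) s :=
  lieb_concavity_trace_general s hs A B C E hA hB hC hE l hl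
end

section
/- One-sided bound from the proof of Theorem 1 (Appendix D): fix a dimension D ≥ 1 and s ∈ [0,1]. Let ρ, ρ' be density matrices and σ, σ' Hermitian complex D×D matrices with ρ+σ and ρ'+σ' positive semidefinite. Suppose L1 ≥ 0 satisfies ‖A^s − B^s‖_spec ≤ L1·‖A−B‖_spec for all positive semidefinite A, B with spectral norm at most 1 + ‖σ‖_spec, and suppose L2 ≥ 0 satisfies ‖A^{1−s} − B^{1−s}‖_spec ≤ L2·‖A−B‖_spec for all positive semidefinite A, B with spectral norm at most 1 + ‖σ'‖_spec. Then |Tr(ρ^s ρ'^{1−s}) − Tr((ρ+σ)^s (ρ'+σ')^{1−s})| ≤ D·[ L1·‖σ‖_spec·(1 + ‖σ'‖_spec)^{1−s} + L2·‖σ'‖_spec ]. -/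
open scoped ComplexOrder

open Matrix

/-!
With `A = ρ^s`, `B = ρ'^{1-s}`, `C = (ρ + σ)^s`, `E = (ρ' + σ')^{1-s}`, write
`AB - CE = A(B - E) + (A - C)E` and use `|Tr X| ≤ D ‖X‖`. A positive semidefinite matrix has
spectral norm at most its trace, so `‖A‖ ≤ 1` and `‖E‖ ≤ (1 + ‖σ'‖)^{1-s}`; the Lipschitz
hypotheses, applied to the pairs `(ρ, ρ + σ)` and `(ρ', ρ' + σ')`, give `‖A - C‖ ≤ L1 ‖σ‖` and
`‖B - E‖ ≤ L2 ‖σ'‖`. The norm bounds on `matPow` come from recognising it as the continuous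
functional calculus, which is isometric for the spectral norm.
-/

open scoped Matrix.Norms.L2Operator

lemma norm_mul_sub_mul_le {R : Type*} [NonUnitalSeminormedRing R] (a b c d : R) :
    ‖a * b - c * d‖ ≤ ‖a‖ * ‖b - d‖ + ‖a - c‖ * ‖d‖ :=
  calc ‖a * b - c * d‖ = ‖a * (b - d) + (a - c) * d‖ := by noncomm_ring
    _ ≤ ‖a‖ * ‖b - d‖ + ‖a - c‖ * ‖d‖ :=
      (norm_add_le _ _).trans (add_le_add (norm_mul_le _ _) (norm_mul_le _ _))

variable {n : Type*} [Fintype n] [DecidableEq n]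

lemma specNorm_eq_norm (A : Matrix n n ℂ) : specNorm A = ‖A‖ := rfl

lemma matPow_eq_cfc {A : Matrix n n ℂ} (hA : A.IsHermitian) (t : ℝ) :
    matPow A t = cfc (fun x : ℝ => if x = 0 then 0 else x ^ t) A := by
  rw [hA.cfc_eq, IsHermitian.cfc, Unitary.conjStarAlgAut_apply, matPow, dif_pos hA]
  rfl

namespace Matrix

lemma IsHermitian.abs_eigenvalues_le_norm {A : Matrix n n ℂ} (hA : A.IsHermitian) (i : n) :
    |hA.eigenvalues i| ≤ ‖A‖ := by
  have := norm_apply_le_norm_cfc id A (hA.eigenvalues_mem_spectrum_real i)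
  rwa [cfc_id ℝ A] at this

lemma IsHermitian.norm_cfc_le {A : Matrix n n ℂ} (hA : A.IsHermitian) {f : ℝ → ℝ} {c : ℝ}
    (hc : 0 ≤ c) (h : ∀ i, |f (hA.eigenvalues i)| ≤ c) : ‖cfc f A‖ ≤ c := by
  refine _root_.norm_cfc_le hc fun x hx => ?_
  obtain ⟨i, rfl⟩ := hA.spectrum_real_eq_range_eigenvalues ▸ hx
  exact h i

lemma IsHermitian.norm_le_of_abs_eigenvalues_le {A : Matrix n n ℂ} (hA : A.IsHermitian) {c : ℝ}
    (hc : 0 ≤ c) (h : ∀ i, |hA.eigenvalues i| ≤ c) : ‖A‖ ≤ c := by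
  simpa only [cfc_id ℝ A] using hA.norm_cfc_le (f := id) hc h

lemma PosSemidef.norm_le_re_trace {A : Matrix n n ℂ} (hA : A.PosSemidef) : ‖A‖ ≤ A.trace.re := by
  have hsum : A.trace.re = ∑ i, hA.1.eigenvalues i := by simp [hA.1.trace_eq_sum_eigenvalues]
  rw [hsum]
  refine hA.1.norm_le_of_abs_eigenvalues_le
    (Finset.sum_nonneg fun i _ => hA.eigenvalues_nonneg i) fun i => ?_
  rw [abs_of_nonneg (hA.eigenvalues_nonneg i)]
  exact Finset.single_le_sum (fun j _ => hA.eigenvalues_nonneg j) (Finset.mem_univ i)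

lemma norm_entry_le_l2_opNorm (A : Matrix n n ℂ) (i j : n) : ‖A i j‖ ≤ ‖A‖ :=
  calc ‖A i j‖ ≤ ‖WithLp.toLp 2 (A.col j)‖ := PiLp.norm_apply_le (WithLp.toLp 2 (A.col j)) i
    _ ≤ ‖A‖ := by simpa using l2_opNorm_mulVec A (EuclideanSpace.single j 1)

lemma norm_trace_le_card_mul_l2_opNorm (A : Matrix n n ℂ) : ‖A.trace‖ ≤ Fintype.card n * ‖A‖ := by
  calc ‖A.trace‖ ≤ ∑ i, ‖A i i‖ := norm_sum_le _ _
    _ ≤ ∑ _i : n, ‖A‖ := Finset.sum_le_sum fun i _ => norm_entry_le_l2_opNorm A i i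
    _ = Fintype.card n * ‖A‖ := by simp

lemma abs_re_trace_sub_re_trace_le (X Y : Matrix n n ℂ) :
    |X.trace.re - Y.trace.re| ≤ Fintype.card n * ‖X - Y‖ := by
  rw [← Complex.sub_re, ← trace_sub]
  exact (Complex.abs_re_le_norm _).trans (norm_trace_le_card_mul_l2_opNorm _)

end Matrix

lemma norm_matPow_le {A : Matrix n n ℂ} (hA : A.PosSemidef) {t : ℝ} (ht : 0 ≤ t) :
    ‖matPow A t‖ ≤ ‖A‖ ^ t := by
  rw [matPow_eq_cfc hA.1]
  refine hA.1.norm_cfc_le (by positivity) fun i => ?_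
  have hnn := hA.eigenvalues_nonneg i
  split_ifs
  · rw [abs_zero]; positivity
  · rw [abs_of_nonneg (by positivity)]
    exact Real.rpow_le_rpow hnn ((le_abs_self _).trans (hA.1.abs_eigenvalues_le_norm i)) ht

theorem one_sided_bound_general {D : ℕ} (s : ℝ) (hs : s ∈ Set.Icc (0:ℝ) 1)
    (ρ ρ' σ σ' : Matrix (Fin D) (Fin D) ℂ)
    (hρ : ρ.PosSemidef) (hρtr : ρ.trace = 1)
    (hρ' : ρ'.PosSemidef) (hρ'tr : ρ'.trace = 1)
    (h1 : (ρ + σ).PosSemidef) (h3 : (ρ' + σ').PosSemidef)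
    (L1 L2 : ℝ)
    (hLip1 : ∀ A B : Matrix (Fin D) (Fin D) ℂ, A.PosSemidef → B.PosSemidef →
      specNorm A ≤ 1 + specNorm σ → specNorm B ≤ 1 + specNorm σ →
      specNorm (matPow A s - matPow B s) ≤ L1 * specNorm (A - B))
    (hLip2 : ∀ A B : Matrix (Fin D) (Fin D) ℂ, A.PosSemidef → B.PosSemidef →
      specNorm A ≤ 1 + specNorm σ' → specNorm B ≤ 1 + specNorm σ' →
      specNorm (matPow A (1 - s) - matPow B (1 - s)) ≤ L2 * specNorm (A - B)) :
    |qs ρ ρ' s - qs (ρ + σ) (ρ' + σ') s| ≤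
      (D : ℝ) * (L1 * specNorm σ * (1 + specNorm σ') ^ (1 - s) + L2 * specNorm σ') := by
  simp only [specNorm_eq_norm] at hLip1 hLip2 ⊢
  obtain ⟨hs0, hs1⟩ := hs
  have hρ_le : ‖ρ‖ ≤ 1 := by simpa [hρtr] using hρ.norm_le_re_trace
  have hρ'_le : ‖ρ'‖ ≤ 1 := by simpa [hρ'tr] using hρ'.norm_le_re_trace
  have hρσ_le : ‖ρ + σ‖ ≤ 1 + ‖σ‖ := (norm_add_le _ _).trans (by linarith)
  have hρ'σ'_le : ‖ρ' + σ'‖ ≤ 1 + ‖σ'‖ := (norm_add_le _ _).trans (by linarith)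
  have hpow : ‖matPow ρ s‖ ≤ 1 :=
    (norm_matPow_le hρ hs0).trans (Real.rpow_le_one (norm_nonneg _) hρ_le hs0)
  have hpow' : ‖matPow (ρ' + σ') (1 - s)‖ ≤ (1 + ‖σ'‖) ^ (1 - s) :=
    (norm_matPow_le h3 (sub_nonneg.2 hs1)).trans
      (Real.rpow_le_rpow (norm_nonneg _) hρ'σ'_le (sub_nonneg.2 hs1))
  have hdiff : ‖matPow ρ s - matPow (ρ + σ) s‖ ≤ L1 * ‖σ‖ := by
    simpa using hLip1 ρ (ρ + σ) hρ h1 (by linarith [norm_nonneg σ]) hρσ_le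
  have hdiff' : ‖matPow ρ' (1 - s) - matPow (ρ' + σ') (1 - s)‖ ≤ L2 * ‖σ'‖ := by
    simpa using hLip2 ρ' (ρ' + σ') hρ' h3 (by linarith [norm_nonneg σ']) hρ'σ'_le
  refine (abs_re_trace_sub_re_trace_le _ _).trans ?_
  rw [Fintype.card_fin]
  gcongr
  refine (norm_mul_sub_mul_le _ _ _ _).trans ?_
  linarith [mul_le_mul hpow hdiff' (norm_nonneg _) zero_le_one,
    mul_le_mul hdiff hpow' (norm_nonneg _) ((norm_nonneg _).trans hdiff)]

/-- One-sided bound from the proof of Theorem 1 (Appendix D). -/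
theorem one_sided_bound {D : ℕ} (hD : 1 ≤ D) (s : ℝ) (hs : s ∈ Set.Icc (0:ℝ) 1)
    (ρ ρ' σ σ' : Matrix (Fin D) (Fin D) ℂ)
    (hρ : ρ.PosSemidef) (hρtr : ρ.trace = 1)
    (hρ' : ρ'.PosSemidef) (hρ'tr : ρ'.trace = 1)
    (hσ : σ.IsHermitian) (hσ' : σ'.IsHermitian)
    (h1 : (ρ + σ).PosSemidef) (h3 : (ρ' + σ').PosSemidef)
    (L1 L2 : ℝ) (hL1 : 0 ≤ L1) (hL2 : 0 ≤ L2)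
    (hLip1 : ∀ A B : Matrix (Fin D) (Fin D) ℂ, A.PosSemidef → B.PosSemidef →
      specNorm A ≤ 1 + specNorm σ → specNorm B ≤ 1 + specNorm σ →
      specNorm (matPow A s - matPow B s) ≤ L1 * specNorm (A - B))
    (hLip2 : ∀ A B : Matrix (Fin D) (Fin D) ℂ, A.PosSemidef → B.PosSemidef →
      specNorm A ≤ 1 + specNorm σ' → specNorm B ≤ 1 + specNorm σ' →
      specNorm (matPow A (1 - s) - matPow B (1 - s)) ≤ L2 * specNorm (A - B)) :
    |qs ρ ρ' s - qs (ρ + σ) (ρ' + σ') s| ≤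
      (D : ℝ) * (L1 * specNorm σ * (1 + specNorm σ') ^ (1 - s) + L2 * specNorm σ') :=
  one_sided_bound_general s hs ρ ρ' σ σ' hρ hρtr hρ' hρ'tr h1 h3 L1 L2 hLip1 hLip2
end
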